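/- For every integer n ≥ 1, every integer k, all real numbers p, q with 0 < q < p ≤ 1, and every real x: Σ_{m=0}^{n} (−1)^{n−m} · S_1(n,m) · Σ_{l=0}^{m} binom(m,l) · (−x)^l / [m−l+1]_{p,q}^k = Σ_{m=0}^{n} (−1)^{n−m} · S_1(n,m,x) / [m+1]_{p,q}^k. -/

import Mathlib

open Finset

/-- The `(p,q)`-integer `[m]_{p,q} = (p^m - q^m)/(p - q)`. -/
noncomputable def pqInt (p q : ℝ) (m : ℕ) : ℝ := (p ^ m - q ^ m) / (p - q)

/-- The unsigned Stirling numbers of the first kind, defined by the recurrence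
`S1(n+1, m+1) = n * S1(n, m+1) + S1(n, m)`, so that
`x(x+1)⋯(x+n-1) = ∑_{m=0}^{n} S1(n,m) x^m`. -/
def stirling1 : ℕ → ℕ → ℕ
  | 0, 0 => 1
  | 0, _ + 1 => 0
  | _ + 1, 0 => 0
  | n + 1, m + 1 => n * stirling1 n (m + 1) + stirling1 n m

/-- Carlitz's weighted Stirling numbers of the first kind,
`S1(n,m,x) = ∑_{i=0}^{n-m} binom(m+i,i) S1(n,m+i) x^i`. -/
noncomputable def stirling1W (n m : ℕ) (x : ℝ) : ℝ :=
  ∑ i ∈ Finset.range (n - m + 1), ((m + i).choose i : ℝ) * (stirling1 n (m + i) : ℝ) * x ^ i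

/-! Neither the Stirling numbers nor the `(p,q)`-integers matter: the identity is a reindexing
of the triangle `l ≤ m ≤ n` by `(j, i) = (m - l, l)`, which collects the coefficient of each
`1/[j+1]^k`, followed by the sign bookkeeping `(-1)^(n-j-i) (-x)^i = (-1)^(n-j) x^i`. -/

theorem sum_range_mul_sum_choose_mul_pow_mul_sub {R : Type*} [CommSemiring R] (n : ℕ)
    (a c : ℕ → R) (y : R) :
    ∑ m ∈ range (n + 1), a m * ∑ l ∈ range (m + 1), (m.choose l : R) * y ^ l * c (m - l) =
      ∑ j ∈ range (n + 1),
        (∑ i ∈ range (n - j + 1), ((j + i).choose i : R) * a (j + i) * y ^ i) * c j := by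
  -- `m` is written as `j + (m - j)` so that the summand has the shape `f j (m - j)`
  -- required by `sum_range_diag_flip`.
  have hreflect : ∀ m, a m * ∑ l ∈ range (m + 1), (m.choose l : R) * y ^ l * c (m - l) =
      ∑ j ∈ range (m + 1),
        a (j + (m - j)) * ((j + (m - j)).choose (m - j) * y ^ (m - j) * c j) := by
    intro m
    rw [mul_sum, ← sum_range_reflect]
    refine sum_congr rfl fun j hj => ?_
    have hjm : j ≤ m := Nat.lt_succ_iff.mp (mem_range.mp hj)
    rw [Nat.add_sub_cancel' hjm, Nat.add_sub_cancel, Nat.sub_sub_self hjm]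
  simp_rw [hreflect, sum_range_diag_flip (n + 1)
    (fun j i => a (j + i) * ((j + i).choose i * y ^ i * c j)), sum_mul]
  refine sum_congr rfl fun j hj => ?_
  rw [show n + 1 - j = n - j + 1 by have := mem_range.mp hj; omega]
  exact sum_congr rfl fun _ _ => by ring

theorem neg_one_pow_sub_mul_neg_pow {R : Type*} [Ring R] {i N : ℕ} (h : i ≤ N) (y : R) :
    (-1 : R) ^ (N - i) * (-y) ^ i = (-1) ^ N * y ^ i := by
  rw [neg_pow y, ← mul_assoc, ← pow_add, Nat.sub_add_cancel h]

theorem pqPolyCauchy_first_kind_two_expressions_general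
    (n : ℕ) (k : ℤ)
    (p q : ℝ) (x : ℝ) :
    ∑ m ∈ Finset.range (n + 1),
        (-1 : ℝ) ^ (n - m) * (stirling1 n m : ℝ) *
          ∑ l ∈ Finset.range (m + 1),
            (m.choose l : ℝ) * (-x) ^ l / pqInt p q (m - l + 1) ^ k =
      ∑ m ∈ Finset.range (n + 1),
        (-1 : ℝ) ^ (n - m) * stirling1W n m x / pqInt p q (m + 1) ^ k := by
  simp only [div_eq_mul_inv]
  rw [sum_range_mul_sum_choose_mul_pow_mul_sub n (fun m => (-1) ^ (n - m) * (stirling1 n m : ℝ))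
    (fun j => (pqInt p q (j + 1) ^ k)⁻¹) (-x)]
  refine sum_congr rfl fun j _ => ?_
  rw [stirling1W, mul_sum]
  congr 1
  refine sum_congr rfl fun i hi => ?_
  have hsign : (-1 : ℝ) ^ (n - (j + i)) * (-x) ^ i = (-1) ^ (n - j) * x ^ i := by
    rw [← Nat.sub_sub]
    exact neg_one_pow_sub_mul_neg_pow (Nat.lt_succ_iff.mp (mem_range.mp hi)) x
  linear_combination ((j + i).choose i * (stirling1 n (j + i) : ℝ)) * hsign

theorem pqPolyCauchy_first_kind_two_expressions
    (n : ℕ) (hn : 1 ≤ n) (k : ℤ)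
    (p q : ℝ) (hq : 0 < q) (hqp : q < p) (hp : p ≤ 1) (x : ℝ) :
    ∑ m ∈ Finset.range (n + 1),
        (-1 : ℝ) ^ (n - m) * (stirling1 n m : ℝ) *
          ∑ l ∈ Finset.range (m + 1),
            (m.choose l : ℝ) * (-x) ^ l / pqInt p q (m - l + 1) ^ k =
      ∑ m ∈ Finset.range (n + 1),
        (-1 : ℝ) ^ (n - m) * stirling1W n m x / pqInt p q (m + 1) ^ k :=
  pqPolyCauchy_first_kind_two_expressions_general n k p q x
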